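/- Let (w_n) be a sequence of real numbers with 0 < w_n < 1 for all n and liminf_{n→∞} n·w_n > 1/2, and use the identity ordering. Then Σ_N(0) = 0 for all N, and there exists θ₀ > 0 such that Σ_N(θ₀) → 0 as N → ∞. In particular, any pointwise limit function Σ(θ) = lim_{N→∞} Σ_N(θ) takes the same value 0 at θ = 0 and at θ = θ₀, hence is not injective. -/

import Mathlib

open Filter

/-- The lift `Φ_n(w; θ) = θ − (2/n)·arctan( Im(w e^{inθ}) / (1 + Re(w e^{inθ})) )`. -/
noncomputable def PhiLift (n : ℕ+) (w : ℂ) (θ : ℝ) : ℝ :=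
  θ - (2 / ((n : ℕ) : ℝ)) * Real.arctan
    ((w * Complex.exp ((((n : ℕ) : ℂ)) * (θ : ℂ) * Complex.I)).im /
      (1 + (w * Complex.exp ((((n : ℕ) : ℂ)) * (θ : ℂ) * Complex.I)).re))

/-- `Σ_0(θ) = θ` and `Σ_N = Φ_N(w_N;·) ∘ ⋯ ∘ Φ_1(w_1;·)` (identity ordering). -/
noncomputable def SigLiftId (w : ℕ+ → ℂ) : ℕ → ℝ → ℝ
  | 0 => fun θ => θ
  | N + 1 => fun θ => PhiLift ⟨N + 1, N.succ_pos⟩ (w ⟨N + 1, N.succ_pos⟩) (SigLiftId w N θ)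

/-!
For real `w ∈ (0, 1)` the lift `Φ_n(w; ·)` fixes `0` and, as long as `nθ < π`, maps `θ` into
`(0, θ]`: the angle it subtracts is `(2/n) arg (1 + w e^{inθ}) < θ`. Once `n w_n ≥ b > 1/2`, the
Taylor bounds `sin φ ≥ φ - φ³/6` and `arctan x ≥ x - x³/2` show that `Φ_n` even maps `(0, t/n]`
into `(0, t/(n+1)]` for a small fixed `t > 0`, so the orbit of `θ₀ = t/(N₀+1)` is squeezed to `0`
while the orbit of `0` stays at `0`.
-/

open Real Set Topology

noncomputable def phiLiftReal (ν w θ : ℝ) : ℝ :=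
  θ - 2 / ν * arctan (w * sin (ν * θ) / (1 + w * cos (ν * θ)))

lemma phiLift_ofReal (n : ℕ+) (w θ : ℝ) :
    PhiLift n (w : ℂ) θ = phiLiftReal (n : ℕ) w θ := by
  have h : ((n : ℕ) : ℂ) * (θ : ℂ) * Complex.I = ((((n : ℕ) : ℝ) * θ : ℝ) : ℂ) * Complex.I := by
    push_cast; ring
  simp only [PhiLift, phiLiftReal, h, Complex.mul_im, Complex.mul_re, Complex.exp_ofReal_mul_I_re,
    Complex.exp_ofReal_mul_I_im, Complex.ofReal_re, Complex.ofReal_im, zero_mul, add_zero, sub_zero]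

lemma sigLiftId_ofReal_succ (w : ℕ+ → ℝ) (N : ℕ) (θ : ℝ) :
    SigLiftId (fun n => (w n : ℂ)) (N + 1) θ =
      phiLiftReal (N + 1) (w N.succPNat) (SigLiftId (fun n => (w n : ℂ)) N θ) := by
  change PhiLift N.succPNat (w N.succPNat : ℂ) _ = _
  rw [phiLift_ofReal, Nat.succPNat_coe, Nat.cast_succ]

lemma sigLiftId_ofReal_zero (w : ℕ+ → ℝ) (N : ℕ) : SigLiftId (fun n => (w n : ℂ)) N 0 = 0 := by
  induction N with
  | zero => rfl
  | succ N ih => simp [sigLiftId_ofReal_succ, ih, phiLiftReal]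

lemma mul_one_sub_sq_div_two_le_arctan {x : ℝ} (hx : 0 ≤ x) : x * (1 - x ^ 2 / 2) ≤ arctan x := by
  have hsqrt : √(1 + x ^ 2) ≤ 1 + x ^ 2 / 2 :=
    sqrt_le_iff.2 ⟨by positivity, by nlinarith [sq_nonneg x]⟩
  calc x * (1 - x ^ 2 / 2) ≤ x / (1 + x ^ 2 / 2) := by
        rw [le_div_iff₀ (by positivity)]; nlinarith [mul_nonneg hx (sq_nonneg (x ^ 2 / 2))]
    _ ≤ x / √(1 + x ^ 2) := div_le_div_of_nonneg_left hx (by positivity) hsqrt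
    _ = sin (arctan x) := (sin_arctan x).symm
    _ ≤ arctan x := sin_le (arctan_nonneg.2 hx)

lemma arctan_lt_half {w φ : ℝ} (hw0 : 0 ≤ w) (hw1 : w < 1) (hφ0 : 0 < φ) (hφ : φ < π) :
    arctan (w * sin φ / (1 + w * cos φ)) < φ / 2 := by
  have hden : 0 < 1 + w * cos φ := by nlinarith [neg_one_le_cos φ]
  have hs : 0 < sin (φ / 2) := sin_pos_of_pos_of_lt_pi (by linarith) (by linarith)
  have hc : 0 < cos (φ / 2) := cos_pos_of_mem_Ioo ⟨by linarith, by linarith⟩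
  have hsin : sin φ = 2 * sin (φ / 2) * cos (φ / 2) := by
    rw [← sin_two_mul, mul_div_cancel₀ _ two_ne_zero]
  have hcos : 1 + cos φ = 2 * cos (φ / 2) ^ 2 := by
    rw [cos_sq, mul_div_cancel₀ _ two_ne_zero]; ring
  -- `tan (φ / 2) = sin φ / (1 + cos φ)`, and this dominates the argument because `w < 1`
  have htan : w * sin φ / (1 + w * cos φ) < tan (φ / 2) := by
    rw [tan_eq_sin_div_cos, div_lt_div_iff₀ hden hc]
    calc w * sin φ * cos (φ / 2) = sin (φ / 2) * (w * (1 + cos φ)) := by rw [hsin, hcos]; ring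
      _ < sin (φ / 2) * (1 + w * cos φ) := by gcongr; linarith
  calc arctan (w * sin φ / (1 + w * cos φ)) < arctan (tan (φ / 2)) := arctan_strictMono htan
    _ = φ / 2 := arctan_tan (by linarith) (by linarith)

lemma phiLiftReal_mem_Ioc {ν w θ : ℝ} (hν : 0 < ν) (hw0 : 0 ≤ w) (hw1 : w < 1) (hθ : 0 < θ)
    (hνθ : ν * θ < π) : phiLiftReal ν w θ ∈ Ioc 0 θ := by
  have hφ : 0 < ν * θ := mul_pos hν hθ
  have hden : 0 < 1 + w * cos (ν * θ) := by nlinarith [neg_one_le_cos (ν * θ)]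
  have hsin : 0 ≤ sin (ν * θ) := (sin_pos_of_pos_of_lt_pi hφ hνθ).le
  have hlt := arctan_lt_half hw0 hw1 hφ hνθ
  have hnonneg : 0 ≤ arctan (w * sin (ν * θ) / (1 + w * cos (ν * θ))) :=
    arctan_nonneg.2 (by positivity)
  constructor
  · calc 0 = θ - 2 / ν * (ν * θ / 2) := by field_simp; ring
      _ < phiLiftReal ν w θ := by unfold phiLiftReal; gcongr
  · unfold phiLiftReal
    have : 0 ≤ 2 / ν * arctan (w * sin (ν * θ) / (1 + w * cos (ν * θ))) := by positivity
    linarith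

lemma le_arctan_of_le_mul {b t ν w φ : ℝ} (hb : b ≤ 1) (ht0 : 0 ≤ t) (ht : 3 * t ≤ 2 * b - 1)
    (hν : 2 ≤ ν * (2 * b - 1)) (hw0 : 0 < w) (hw1 : w < 1) (hbw : b ≤ ν * w)
    (hφ : ν * t / (ν + 1) ≤ φ) (hφt : φ ≤ t) :
    t / (2 * (ν + 1)) ≤ arctan (w * sin φ / (1 + w * cos φ)) := by
  have hb2 : 0 < 2 * b - 1 := by nlinarith
  have hb0 : 0 < b := by linarith
  have hν1 : 2 ≤ ν := by nlinarith
  have ht1 : t ≤ 1 / 3 := by linarith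
  have hφ0 : 0 ≤ φ := le_trans (by positivity) hφ
  have hsin : 0 ≤ sin φ := sin_nonneg_of_nonneg_of_le_pi hφ0 (by linarith [pi_gt_three])
  have hcos : 0 ≤ cos φ :=
    cos_nonneg_of_mem_Icc ⟨by linarith [pi_gt_three], by linarith [pi_gt_three]⟩
  set x := w * sin φ / (1 + w * cos φ)
  have hx0 : 0 ≤ x := by positivity
  have hxt : x ≤ t := calc
    x ≤ w * sin φ := div_le_self (by positivity) (by nlinarith)
    _ ≤ 1 * φ := by gcongr; exact sin_le hφ0
    _ ≤ t := by linarith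
  have hx : b / (ν + 1) * sin φ ≤ x := by
    rw [div_mul_eq_mul_div, div_le_div_iff₀ (by positivity) (by positivity)]
    have hcoef : b * (1 + w * cos φ) ≤ w * (ν + 1) := by
      nlinarith [mul_le_mul_of_nonneg_left (cos_le_one φ) hw0.le]
    nlinarith [mul_le_mul_of_nonneg_left hcoef hsin]
  have hsin_ge : φ * (1 - t ^ 2 / 6) ≤ sin φ := by
    nlinarith [sin_ge_sub_cube hφ0, mul_le_mul_of_nonneg_left (pow_le_pow_left₀ hφ0 hφt 2) hφ0]
  -- the margin `ν (2b - 1) ≥ 2` absorbs the cubic error terms once `3 t ≤ 2b - 1`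
  have hpoly : ν + 1 ≤ 2 * b * ν * ((1 - t ^ 2 / 6) * (1 - t ^ 2 / 2)) := by
    have hνt : ν * (3 * t ^ 2) ≤ ν * (2 * b - 1) :=
      mul_le_mul_of_nonneg_left (by nlinarith) (by linarith)
    nlinarith [hνt, mul_nonneg (by positivity : (0:ℝ) ≤ b * ν) (pow_nonneg (sq_nonneg t) 2)]
  have ht2 : 0 ≤ 1 - t ^ 2 / 2 := by nlinarith
  calc t / (2 * (ν + 1))
      ≤ b / (ν + 1) * (ν * t / (ν + 1) * (1 - t ^ 2 / 6)) * (1 - t ^ 2 / 2) := by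
        rw [div_le_iff₀ (by positivity)]
        have : b / (ν + 1) * (ν * t / (ν + 1) * (1 - t ^ 2 / 6)) * (1 - t ^ 2 / 2) * (2 * (ν + 1))
            = t / (ν + 1) * (2 * b * ν * ((1 - t ^ 2 / 6) * (1 - t ^ 2 / 2))) := by
          field_simp
        rw [this, div_mul_eq_mul_div, le_div_iff₀ (by positivity)]
        exact mul_le_mul_of_nonneg_left hpoly ht0
    _ ≤ b / (ν + 1) * sin φ * (1 - t ^ 2 / 2) := by
        gcongr
        exact (mul_le_mul_of_nonneg_right hφ (by nlinarith)).trans hsin_ge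
    _ ≤ x * (1 - x ^ 2 / 2) := by gcongr
    _ ≤ arctan x := mul_one_sub_sq_div_two_le_arctan hx0

lemma phiLiftReal_le_of_mem_Ioc {b t ν w θ : ℝ} (hb : b ≤ 1) (ht0 : 0 < t) (ht : 3 * t ≤ 2 * b - 1)
    (hν : 2 ≤ ν * (2 * b - 1)) (hw0 : 0 < w) (hw1 : w < 1) (hbw : b ≤ ν * w)
    (hθ : θ ∈ Ioc 0 (t / ν)) : phiLiftReal ν w θ ≤ t / (ν + 1) := by
  have hν0 : 0 < ν := by nlinarith
  have hνθ : ν * θ ≤ t := (le_div_iff₀' hν0).1 hθ.2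
  rcases le_or_gt θ (t / (ν + 1)) with hsmall | hlarge
  · have hπ : ν * θ < π := by linarith [pi_gt_three]
    exact (phiLiftReal_mem_Ioc hν0 hw0.le hw1 hθ.1 hπ).2.trans hsmall
  · have hφ : ν * t / (ν + 1) ≤ ν * θ := by
      rw [mul_div_assoc]; exact mul_le_mul_of_nonneg_left hlarge.le hν0.le
    have harctan := le_arctan_of_le_mul hb ht0.le ht hν hw0 hw1 hbw hφ hνθ
    calc phiLiftReal ν w θ ≤ t / ν - 2 / ν * (t / (2 * (ν + 1))) := by
          unfold phiLiftReal; gcongr; exact hθ.2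
      _ = t / (ν + 1) := by field_simp; ring

lemma tendsto_zero_of_eventually_contracting {f : ℕ → ℝ → ℝ} {x : ℕ → ℝ} {t : ℝ} (N₀ : ℕ)
    (hx : ∀ N, x (N + 1) = f N (x N)) (hx0 : x 0 ∈ Ioc 0 (t / (N₀ + 1)))
    (hf : ∀ (N : ℕ) θ, θ ∈ Ioc 0 (t / (N + 1)) → f N θ ∈ Ioc 0 θ)
    (hcontr : ∀ N ≥ N₀, ∀ θ ∈ Ioc 0 (t / (N + 1)), f N θ ≤ t / (N + 1 + 1)) :
    Tendsto x atTop (𝓝 0) := by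
  have ht : 0 ≤ t := ((div_pos_iff_of_pos_right (by positivity)).1 (hx0.1.trans_le hx0.2)).le
  have hbound : ∀ N, x N ∈ Ioc 0 (t / (max N N₀ + 1 : ℕ)) := by
    intro N
    induction N with
    | zero => simpa using hx0
    | succ N ih =>
      have hxN : x N ∈ Ioc 0 (t / (N + 1)) :=
        ⟨ih.1, ih.2.trans (div_le_div_of_nonneg_left ht (by positivity) (by simp))⟩
      rw [hx]
      refine ⟨(hf N _ hxN).1, ?_⟩
      rcases le_or_gt N₀ N with hN | hN
      · simpa [max_eq_left hN, max_eq_left (hN.trans N.le_succ)] using hcontr N hN _ hxN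
      · rw [max_eq_right hN.le] at ih
        rw [max_eq_right (Nat.succ_le_of_lt hN)]
        exact (hf N _ hxN).2.trans ih.2
  refine squeeze_zero' (Eventually.of_forall fun N => (hbound N).1.le) ?_
    (tendsto_const_div_atTop_nhds_zero_nat t |>.comp (tendsto_add_atTop_nat 1))
  filter_upwards [eventually_ge_atTop N₀] with N hN
  simpa [max_eq_left hN] using (hbound N).2

lemma exists_eventually_le_succ_mul {w : ℕ+ → ℝ} (hw : ∀ n, 0 < w n)
    (hliminf : 1 / 2 < liminf (fun n : ℕ+ => ((n : ℕ) : ℝ) * w n) atTop) :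
    ∃ b, 1 / 2 < b ∧ b ≤ 1 ∧ ∀ᶠ N : ℕ in atTop, b ≤ (N + 1) * w N.succPNat := by
  obtain ⟨b, hb, hbL⟩ := exists_between hliminf
  have hbdd : IsBoundedUnder (· ≥ ·) atTop (fun n : ℕ+ => ((n : ℕ) : ℝ) * w n) :=
    isBoundedUnder_of ⟨0, fun n => (mul_pos (by positivity) (hw n)).le⟩
  have hsucc : Tendsto Nat.succPNat atTop atTop :=
    Nat.succPNat_mono.tendsto_atTop_atTop fun n => ⟨n.natPred, (PNat.succPNat_natPred n).ge⟩
  refine ⟨min b 1, lt_min hb (by norm_num), min_le_right _ _, ?_⟩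
  filter_upwards [hsucc.eventually (eventually_lt_of_lt_liminf hbL hbdd)] with N hN
  simpa using (min_le_left b 1).trans hN.le

/-- If `0 < w_n < 1` are real with `liminf n·w_n > 1/2` (identity ordering), then
`Σ_N(0) = 0` for all `N` and there is `θ₀ > 0` with `Σ_N(θ₀) → 0`; hence any pointwise
limit `Σ` of the `Σ_N` satisfies `Σ(θ₀) = Σ(0) = 0` and is not injective. -/
theorem sigLift_not_injective_of_liminf_gt (w : ℕ+ → ℝ)
    (hw : ∀ n, 0 < w n ∧ w n < 1)
    (hliminf : 1 / 2 < Filter.liminf (fun n : ℕ+ => ((n : ℕ) : ℝ) * w n) atTop) :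
    (∀ N : ℕ, SigLiftId (fun n => ((w n : ℝ) : ℂ)) N 0 = 0) ∧
    ∃ θ₀ : ℝ, 0 < θ₀ ∧
      Tendsto (fun N => SigLiftId (fun n => ((w n : ℝ) : ℂ)) N θ₀) atTop (nhds 0) ∧
      ∀ S : ℝ → ℝ,
        (∀ θ : ℝ, Tendsto (fun N => SigLiftId (fun n => ((w n : ℝ) : ℂ)) N θ) atTop
          (nhds (S θ))) →
        S θ₀ = 0 ∧ S 0 = 0 ∧ ¬ Function.Injective S := by
  obtain ⟨b, hb, hb1, hbw⟩ := exists_eventually_le_succ_mul (fun n => (hw n).1) hliminf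
  have hν : ∀ᶠ N : ℕ in atTop, 2 ≤ ((N : ℝ) + 1) * (2 * b - 1) :=
    ((tendsto_natCast_atTop_atTop.atTop_add tendsto_const_nhds).atTop_mul_const
      (by linarith)).eventually_ge_atTop 2
  obtain ⟨N₀, hN₀⟩ := eventually_atTop.1 (hbw.and hν)
  obtain ⟨t, ht0, ht⟩ : ∃ t : ℝ, 0 < t ∧ 3 * t ≤ 2 * b - 1 :=
    ⟨(2 * b - 1) / 3, by linarith, by linarith⟩
  have hθ₀ : 0 < t / (N₀ + 1) := by positivity
  have hlim : Tendsto (fun N => SigLiftId (fun n => (w n : ℂ)) N (t / (N₀ + 1))) atTop (𝓝 0) := by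
    refine tendsto_zero_of_eventually_contracting N₀ (sigLiftId_ofReal_succ w · _) ⟨hθ₀, le_rfl⟩
      (fun N θ hθ => ?_) (fun N hN θ hθ => ?_)
    · have hπ : (N + 1) * θ < π := by
        linarith [(le_div_iff₀' (by positivity)).1 hθ.2, pi_gt_three]
      exact phiLiftReal_mem_Ioc (by positivity) (hw _).1.le (hw _).2 hθ.1 hπ
    · exact phiLiftReal_le_of_mem_Ioc hb1 ht0 ht (hN₀ N hN).2 (hw _).1 (hw _).2
        (hN₀ N hN).1 hθ
  have hzero := sigLiftId_ofReal_zero w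
  refine ⟨hzero, t / (N₀ + 1), hθ₀, hlim, fun S hS => ?_⟩
  have hSθ₀ : S (t / (N₀ + 1)) = 0 := tendsto_nhds_unique (hS _) hlim
  have hS0 : S 0 = 0 := tendsto_nhds_unique (hS 0) (by simp [hzero])
  exact ⟨hSθ₀, hS0, fun hinj => hθ₀.ne' (hinj (hSθ₀.trans hS0.symm))⟩
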